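/- The moments of Lucas polynomials are central binomial coefficients: if Λ_L is the linear functional determined by Λ_L(L*_n(x,-1)) = [n=0] (with L*_0 = 1), then Λ_L(x^{2n}) = C(2n,n) and Λ_L(x^{2n+1}) = 0. -/

import Mathlib

/-!
Substituting `x = t + t⁻¹` turns `L_n(x,-1)` into `t ^ n + t⁻¹ ^ n`. Symmetrizing the binomial
expansion of `(t + t⁻¹) ^ m` therefore gives the polynomial identity
`2 x ^ m = ∑ₖ C(m,k) L_{|m - 2k|}`. Applying `Λ` kills every term except `k = m / 2` when `m` is
even, where `L_0 = 2 L*_0` contributes `2 C(m, m/2)`.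
-/

open Finset Polynomial

noncomputable def lucasPoly : ℕ → Polynomial ℝ
  | 0 => 2
  | 1 => Polynomial.X
  | (n + 2) => Polynomial.X * lucasPoly (n + 1) - lucasPoly n

noncomputable def lucasStarPoly (n : ℕ) : Polynomial ℝ :=
  if n = 0 then 1 else lucasPoly n

theorem pow_add_mul_pow_of_mul_eq_one {R : Type*} [CommMonoid R] {t u : R} (htu : t * u = 1)
    (i j : ℕ) : t ^ (i + j) * u ^ i = t ^ j := by
  rw [add_comm, pow_add, mul_assoc, ← mul_pow, htu, one_pow, mul_one]

theorem pow_natAbs_add_pow_natAbs_of_mul_eq_one {R : Type*} [CommSemiring R] {t u : R}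
    (htu : t * u = 1) {m k : ℕ} (hkm : k ≤ m) :
    t ^ ((m : ℤ) - 2 * k).natAbs + u ^ ((m : ℤ) - 2 * k).natAbs
      = t ^ (m - k) * u ^ k + t ^ k * u ^ (m - k) := by
  have hut : u * t = 1 := by rw [mul_comm, htu]
  rcases le_total (2 * k) m with h | h
  · obtain ⟨j, rfl⟩ := Nat.exists_eq_add_of_le h
    rw [show ((↑(2 * k + j) : ℤ) - 2 * k).natAbs = j by omega, show 2 * k + j - k = k + j by omega,
      pow_add_mul_pow_of_mul_eq_one htu, mul_comm (t ^ k), pow_add_mul_pow_of_mul_eq_one hut]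
  · obtain ⟨i, j, rfl, rfl⟩ : ∃ i j, k = i + j ∧ m = 2 * i + j := ⟨m - k, 2 * k - m, by omega, by omega⟩
    rw [show ((↑(2 * i + j) : ℤ) - 2 * ↑(i + j)).natAbs = j by omega,
      show 2 * i + j - (i + j) = i by omega, mul_comm (t ^ i),
      pow_add_mul_pow_of_mul_eq_one hut, pow_add_mul_pow_of_mul_eq_one htu, add_comm]

theorem two_mul_add_pow_eq_sum_of_mul_eq_one {R : Type*} [CommSemiring R] {t u : R}
    (htu : t * u = 1) (m : ℕ) :
    2 * (t + u) ^ m = ∑ k ∈ range (m + 1),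
      (m.choose k : R) * (t ^ ((m : ℤ) - 2 * k).natAbs + u ^ ((m : ℤ) - 2 * k).natAbs) := by
  have hsum := congrArg₂ (· + ·) (add_pow u t m) (add_pow t u m)
  simp only [add_comm u t, ← two_mul, ← sum_add_distrib] at hsum
  rw [hsum]
  refine sum_congr rfl fun k hk => ?_
  rw [pow_natAbs_add_pow_natAbs_of_mul_eq_one htu (Nat.lt_succ_iff.mp (mem_range.mp hk))]
  ring

theorem lucasPoly_eval_add {t u : ℝ} (htu : t * u = 1) :
    ∀ n : ℕ, (lucasPoly n).eval (t + u) = t ^ n + u ^ n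
  | 0 => by norm_num [lucasPoly]
  | 1 => by simp [lucasPoly]
  | n + 2 => by
    simp only [lucasPoly, eval_sub, eval_mul, eval_X, lucasPoly_eval_add htu (n + 1),
      lucasPoly_eval_add htu n]
    linear_combination (t ^ n + u ^ n) * htu

theorem two_smul_X_pow_eq_sum_lucasPoly (m : ℕ) :
    (2 : ℝ) • X ^ m = ∑ k ∈ range (m + 1), (m.choose k : ℝ) • lucasPoly ((m : ℤ) - 2 * k).natAbs := by
  have hunbounded : ¬BddAbove ((fun t : ℝ => t + t⁻¹) '' Set.Ioi 1) := by
    rintro ⟨M, hM⟩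
    have ht : (1 : ℝ) < max M 1 + 1 := by linarith [le_max_right M 1]
    have := hM ⟨_, ht, rfl⟩
    dsimp only at this
    nlinarith [le_max_left M 1, inv_pos.mpr (zero_lt_one.trans ht)]
  refine eq_of_infinite_eval_eq _ _ ((Set.infinite_of_not_bddAbove hunbounded).mono ?_)
  rintro _ ⟨t, ht, rfl⟩
  have htu : t * t⁻¹ = 1 := mul_inv_cancel₀ (zero_lt_one.trans ht).ne'
  simp only [Set.mem_ofPred_eq, eval_pow, eval_X, eval_finsetSum, eval_smul, lucasPoly_eval_add htu,
    smul_eq_mul]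
  exact two_mul_add_pow_eq_sum_of_mul_eq_one htu m

theorem map_lucasPoly (Λ : Polynomial ℝ →ₗ[ℝ] ℝ)
    (h : ∀ n : ℕ, Λ (lucasStarPoly n) = if n = 0 then 1 else 0) (n : ℕ) :
    Λ (lucasPoly n) = if n = 0 then 2 else 0 := by
  rcases n with _ | n
  · have h0 : lucasPoly 0 = (2 : ℝ) • lucasStarPoly 0 := by
      rw [lucasPoly, lucasStarPoly, if_pos rfl, two_smul, one_add_one_eq_two]
    simp [h0, h]
  · simpa [lucasStarPoly] using h (n + 1)

theorem map_X_pow (Λ : Polynomial ℝ →ₗ[ℝ] ℝ)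
    (h : ∀ n : ℕ, Λ (lucasStarPoly n) = if n = 0 then 1 else 0) (m : ℕ) :
    Λ (X ^ m) = ∑ k ∈ range (m + 1), if m = 2 * k then (m.choose k : ℝ) else 0 := by
  have hcast : ∀ k : ℕ, (m : ℤ) = 2 * k ↔ m = 2 * k := by omega
  have h2 := congrArg Λ (two_smul_X_pow_eq_sum_lucasPoly m)
  simp only [map_smul, map_sum, map_lucasPoly Λ h, smul_eq_mul, Int.natAbs_eq_zero, sub_eq_zero,
    hcast, mul_ite, mul_zero] at h2
  refine mul_left_cancel₀ (two_ne_zero (α := ℝ)) (h2.trans ?_)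
  rw [mul_sum]
  exact sum_congr rfl fun k _ => by split_ifs <;> ring

/-- The moments of the Lucas polynomials are the central binomial coefficients:
if `Λ(L*_n(x,-1)) = [n=0]` then `Λ(x^{2n}) = C(2n,n)` and `Λ(x^{2n+1}) = 0`. -/
theorem lucas_moments (Λ : Polynomial ℝ →ₗ[ℝ] ℝ)
    (h : ∀ n : ℕ, Λ (lucasStarPoly n) = if n = 0 then 1 else 0) (n : ℕ) :
    Λ (Polynomial.X ^ (2 * n)) = ((2 * n).choose n : ℝ) ∧
    Λ (Polynomial.X ^ (2 * n + 1)) = 0 := by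
  rw [map_X_pow Λ h, map_X_pow Λ h]
  constructor
  · simp_rw [Nat.mul_left_cancel_iff two_pos]
    exact (sum_ite_eq _ _ _).trans (if_pos (mem_range.mpr (by omega)))
  · exact sum_eq_zero fun k _ => if_neg (by omega)
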